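/- arXiv:2104.11822 — 6 statements merged into one kernel-verified Lean document; each statement's English description precedes it below -/
import Mathlib

section
/- Let κ be an infinite cardinal and k ≥ 1, and order [κ]^k colexicographically. Then for every α < κ, the set [α+1]^k of k-element subsets of α+1 is an initial segment of ([κ]^k, ≼) whose order type γ_k(α) is strictly less than κ. -/
open Cardinal Ordinal Filter Set
open scoped symmDiff

/-!
Colex on `Finset α` is the restriction of colex on `α →₀ ℕ` to indicator functions, which
Mathlib knows to be well founded when `α` is; so `([κ]^k, ≼)` and all its subsets are well
ordered. The sets bounded by `a` form an initial segment because colex-smaller sets have smaller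
elements, and there are fewer than `κ` of them: they are finite subsets of `Iic a`, which has
size `< κ` because `κ.ord` is an initial ordinal.
-/

namespace Finset.Colex

variable {α : Type*} [LinearOrder α]

theorem toColex_toFinsupp_lt_of_lt {s t : Finset α} (hst : toColex s < toColex t) :
    toColex (Multiset.toFinsupp s.val) < toColex (Multiset.toFinsupp t.val) := by
  obtain ⟨w, hw, hfilter⟩ := lt_iff_exists_filter_lt.1 hst
  rw [mem_sdiff] at hw
  have hcount (u : Finset α) (j : α) : Multiset.toFinsupp u.val j = if j ∈ u then 1 else 0 := by
    simp only [Multiset.toFinsupp_apply, Multiset.count_eq_of_nodup u.nodup, Finset.mem_val]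
  refine Finsupp.Colex.lt_iff.2 ⟨w, fun j hwj ↦ ?_, ?_⟩
  · have hj : j ∈ s ↔ j ∈ t := by simpa [hwj] using Finset.ext_iff.1 hfilter j
    simp only [ofColex_toColex, hcount, hj]
  · simp [hcount, hw.1, hw.2]

instance instWellFoundedLT [WellFoundedLT α] : WellFoundedLT (Colex (Finset α)) :=
  StrictMono.wellFoundedLT
    (f := fun s : Colex (Finset α) ↦ toColex (Multiset.toFinsupp (ofColex s).val))
    fun _ _ ↦ toColex_toFinsupp_lt_of_lt

end Finset.Colex

theorem Cardinal.mk_finset_lt {α : Type*} {κ : Cardinal} (hκ : ℵ₀ ≤ κ) (hα : #α < κ) :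
    #(Finset α) < κ := by
  rcases finite_or_infinite α with _ | _
  · exact (lt_aleph0_of_finite _).trans_le hκ
  · rwa [mk_finset_of_infinite]

theorem stmt_5_general (κ : Cardinal.{0}) (hκ : Cardinal.aleph0 ≤ κ) (k : ℕ)
    (a : κ.ord.ToType) :
    (∀ s t : Finset κ.ord.ToType, s.card = k → t.card = k →
      (∀ x ∈ s, x ≤ a) → toColex t < toColex s → ∀ x ∈ t, x ≤ a) ∧
    ∃ hwo : IsWellOrder {s : Finset κ.ord.ToType // s.card = k ∧ ∀ x ∈ s, x ≤ a}
        (fun s t => toColex s.1 < toColex t.1),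
      @Ordinal.type {s : Finset κ.ord.ToType // s.card = k ∧ ∀ x ∈ s, x ≤ a}
        (fun s t => toColex s.1 < toColex t.1) hwo < κ.ord := by
  let S := {s : Finset κ.ord.ToType // s.card = k ∧ ∀ x ∈ s, x ≤ a}
  let f : S ↪ Colex (Finset κ.ord.ToType) :=
    ⟨fun s ↦ toColex s.1, fun s t h ↦ Subtype.ext (toColex_inj.1 h)⟩
  have hwo : IsWellOrder S (fun s t ↦ toColex s.1 < toColex t.1) :=
    (RelEmbedding.preimage f (· < ·)).isWellOrder
  refine ⟨fun s t _ _ hs hts ↦ Finset.Colex.forall_le_mono hts.le hs, hwo, ?_⟩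
  rw [lt_ord, card_type]
  have hIic : #(Iic a) < κ := by simpa using mk_Iic_lt a (by simp) (by simpa)
  calc #S ≤ #{s : Finset κ.ord.ToType // ∀ x ∈ s, x ≤ a} :=
        mk_le_of_injective (f := fun s : S ↦ ⟨s.1, s.2.2⟩) fun _ _ h ↦
          Subtype.ext (Subtype.mk.inj h)
    _ = #(Finset (Iic a)) := (mk_congr (Equiv.finsetSubtypeComm _)).symm
    _ < κ := mk_finset_lt hκ hIic

/-- For every α < κ, the set [α+1]^k of k-element subsets of α+1 is an initial
segment of ([κ]^k, ≼) (colexicographic order) whose order type γ_k(α) is strictly less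
than κ. -/
theorem stmt_5 (κ : Cardinal.{0}) (hκ : Cardinal.aleph0 ≤ κ) (k : ℕ) (hk : 1 ≤ k)
    (a : κ.ord.ToType) :
    (∀ s t : Finset κ.ord.ToType, s.card = k → t.card = k →
      (∀ x ∈ s, x ≤ a) → toColex t < toColex s → ∀ x ∈ t, x ≤ a) ∧
    ∃ hwo : IsWellOrder {s : Finset κ.ord.ToType // s.card = k ∧ ∀ x ∈ s, x ≤ a}
        (fun s t => toColex s.1 < toColex t.1),
      @Ordinal.type {s : Finset κ.ord.ToType // s.card = k ∧ ∀ x ∈ s, x ≤ a}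
        (fun s t => toColex s.1 < toColex t.1) hwo < κ.ord :=
  stmt_5_general κ hκ k a
end

section
/- Let U be a normal κ-complete nonprincipal ultrafilter on a measurable cardinal κ. For every partition of [κ]^k into two pieces (k ≥ 1), there exists A ∈ U such that [A]^k is contained in one piece (Rowbottom's theorem for finite exponents). -/
open Cardinal Ordinal Filter Set

/-!
Induction on `k`. Given `P` and exponent `k + 1`, for every `a` the induction hypothesis yields
`A a ∈ U` on which `t ↦ insert a t ∈ P` is constant on `[A a]^k`, with value `q a`. Normality
puts the diagonal intersection `D` of the `A a` in `U`, and for `s ∈ [D]^(k+1)` with least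
element `a` the rest of `s` lies in `A a`, so `s ∈ P ↔ q a`. Shrinking `D` to the `a` where
`q a` takes its `U`-majority value gives the homogeneous set.
-/

variable {α : Type*}

def IsHomogeneous (P : Set (Finset α)) (k : ℕ) (A : Set α) : Prop :=
  ∃ q : Prop, ∀ s : Finset α, s.card = k → ↑s ⊆ A → (s ∈ P ↔ q)

theorem isHomogeneous_iff {P : Set (Finset α)} {k : ℕ} {A : Set α} :
    IsHomogeneous P k A ↔
      (∀ s : Finset α, s.card = k → ↑s ⊆ A → s ∈ P) ∨
      (∀ s : Finset α, s.card = k → ↑s ⊆ A → s ∉ P) := by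
  constructor
  · rintro ⟨q, hq⟩
    by_cases h : q
    · exact Or.inl fun s hs hsA => (hq s hs hsA).2 h
    · exact Or.inr fun s hs hsA hP => h ((hq s hs hsA).1 hP)
  · rintro (h | h)
    · exact ⟨True, fun s hs hsA => iff_true_intro (h s hs hsA)⟩
    · exact ⟨False, fun s hs hsA => iff_false_intro (h s hs hsA)⟩

theorem isHomogeneous_zero (P : Set (Finset α)) (A : Set α) : IsHomogeneous P 0 A :=
  ⟨∅ ∈ P, fun s hs _ => by rw [Finset.card_eq_zero.mp hs]⟩

theorem Ultrafilter.setOf_iff_mem_mem (U : Ultrafilter α) (p : α → Prop) :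
    {a | p a ↔ {x | p x} ∈ U} ∈ U := by
  by_cases h : {x | p x} ∈ U
  · simp only [h, iff_true]
  · simp only [h, iff_false]
    exact U.compl_mem_iff_notMem.mpr h

section LinearOrder

variable [LinearOrder α]

def diagInter (X : α → Set α) : Set α :=
  {a | ∀ b < a, a ∈ X b}

theorem Finset.erase_min'_subset_of_subset_diagInter {X : α → Set α} {s : Finset α}
    (hs : s.Nonempty) (hsX : ↑s ⊆ diagInter X) : ↑(s.erase (s.min' hs)) ⊆ X (s.min' hs) := by
  intro x hx
  have hxs : x ∈ s := Finset.mem_of_mem_erase hx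
  exact hsX hxs _ (lt_of_le_of_ne (s.min'_le x hxs) (Finset.ne_of_mem_erase hx).symm)

theorem Ultrafilter.exists_mem_isHomogeneous_of_normal (U : Ultrafilter α)
    (hnormal : ∀ X : α → Set α, (∀ a, X a ∈ U) → diagInter X ∈ U) (k : ℕ)
    (P : Set (Finset α)) : ∃ A ∈ U, IsHomogeneous P k A := by
  induction k generalizing P with
  | zero => exact ⟨univ, univ_mem, isHomogeneous_zero P univ⟩
  | succ k ih =>
    choose A hAU q hq using fun a : α => ih {t | insert a t ∈ P}
    refine ⟨diagInter A ∩ {a | q a ↔ {x | q x} ∈ U},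
      inter_mem (hnormal A hAU) (U.setOf_iff_mem_mem q), {x | q x} ∈ U, ?_⟩
    intro s hs hsC
    have hne : s.Nonempty := Finset.card_pos.mp (by omega)
    set a := s.min' hne
    have hrest : ↑(s.erase a) ⊆ A a :=
      Finset.erase_min'_subset_of_subset_diagInter hne fun x hx => (hsC hx).1
    have hcard : (s.erase a).card = k := by
      rw [Finset.card_erase_of_mem (s.min'_mem hne), hs, Nat.add_sub_cancel]
    calc s ∈ P ↔ insert a (s.erase a) ∈ P := by rw [Finset.insert_erase (s.min'_mem hne)]
      _ ↔ q a := hq a (s.erase a) hcard hrest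
      _ ↔ {x | q x} ∈ U := (hsC (s.min'_mem hne)).2

end LinearOrder

theorem stmt_13_general (κ : Cardinal.{0})
    (U : Ultrafilter κ.ord.ToType)
    (hnormal : ∀ X : κ.ord.ToType → Set κ.ord.ToType,
      (∀ a, X a ∈ U) → {a | ∀ b < a, a ∈ X b} ∈ U)
    (k : ℕ) (P : Set (Finset κ.ord.ToType)) :
    ∃ A ∈ U,
      (∀ s : Finset κ.ord.ToType, s.card = k → (∀ x ∈ s, x ∈ A) → s ∈ P) ∨
      (∀ s : Finset κ.ord.ToType, s.card = k → (∀ x ∈ s, x ∈ A) → s ∉ P) := by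
  obtain ⟨A, hAU, hA⟩ := U.exists_mem_isHomogeneous_of_normal hnormal k P
  exact ⟨A, hAU, isHomogeneous_iff.mp hA⟩

/-- Rowbottom's theorem for finite exponents: For a normal κ-complete
nonprincipal ultrafilter U on a measurable cardinal κ and every partition of [κ]^k into
two pieces (k ≥ 1), there is A ∈ U with [A]^k contained in one piece. -/
theorem stmt_13 (κ : Cardinal.{0}) (hκ : Cardinal.aleph0 < κ)
    (U : Ultrafilter κ.ord.ToType)
    (hnonprincipal : ∀ x, U ≠ pure x)
    (hcomplete : ∀ S : Set (Set κ.ord.ToType), #S < κ → (∀ s ∈ S, s ∈ U) → ⋂₀ S ∈ U)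
    (hnormal : ∀ X : κ.ord.ToType → Set κ.ord.ToType,
      (∀ a, X a ∈ U) → {a | ∀ b < a, a ∈ X b} ∈ U)
    (k : ℕ) (hk : 1 ≤ k) (P : Set (Finset κ.ord.ToType)) :
    ∃ A ∈ U,
      (∀ s : Finset κ.ord.ToType, s.card = k → (∀ x ∈ s, x ∈ A) → s ∈ P) ∨
      (∀ s : Finset κ.ord.ToType, s.card = k → (∀ x ∈ s, x ∈ A) → s ∉ P) :=
  stmt_13_general κ U hnormal k P
end

section
/- Let κ be a measurable cardinal and U a normal κ-complete nonprincipal ultrafilter on κ. Then the topological group B(κ_U) of finite subsets of κ under symmetric difference, with neighborhood base at zero {[A]^{<ω} : A ∈ U}, is extremally disconnected: the closure of every open set is open. -/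
open Cardinal Filter Set
open scoped symmDiff Topology

/-!
Let `t ∈ closure V`. Then `insert α t ∈ closure V` for `U`-almost every `α`: otherwise choose
`B α ∈ U` witnessing `insert α t ∉ closure V` and a finite `w` inside the diagonal intersection of
the `B α` with `t ∆ w ∈ V`. If `w = ∅`, openness of `V` gives a contradiction; otherwise, with
`α = min w`, we get `t ∆ w = insert α t ∆ (w \ {α})` and `w \ {α} ⊆ B α`.
Below each point there are fewer than `κ` finite sets, so normality turns these one-point
extensions into a single `A ∈ U` with `s ∆ w ∈ closure V` for all finite `w ⊆ A`: the closure is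
a neighbourhood of each of its points.
-/

theorem Cardinal.mk_setOf_finset_subset_le {X : Type*} (S : Set X) :
    #{u : Finset X | ↑u ⊆ S} ≤ max ℵ₀ #S := by
  classical
  calc #{u : Finset X | ↑u ⊆ S}
      ≤ #(range (Finset.map (Function.Embedding.subtype (· ∈ S)))) := by
        refine mk_le_mk_of_subset fun u hu => ⟨u.subtype (· ∈ S), ?_⟩
        exact Finset.subtype_map_of_mem fun x hx => hu hx
    _ ≤ #(Finset S) := mk_range_le
    _ ≤ #(List S) := mk_le_of_surjective List.toFinset_surjective
    _ ≤ max ℵ₀ #S := mk_list_le_max S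

namespace Ultrafilter

variable {X : Type*} [LinearOrder X] {κ : Cardinal} {U : Ultrafilter X}

theorem diagonal_finset_mem [CardinalInterFilter (U : Filter X) κ] (hκ : ℵ₀ < κ)
    (hsmall : ∀ b : X, #(Iio b) < κ)
    (hnormal : ∀ C : X → Set X, (∀ a, C a ∈ U) → {a | ∀ b < a, a ∈ C b} ∈ U)
    {C : Finset X → Set X} (hC : ∀ u, C u ∈ U) :
    {a | ∀ u : Finset X, (∀ x ∈ u, x < a) → a ∈ C u} ∈ U := by
  have hbounded : ∀ b : X, #{u : Finset X | ↑u ⊆ Iic b} < κ := by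
    intro b
    have hIic : #(Iic b) < κ := by
      rw [← Iio_insert]
      exact mk_insert_le.trans_lt (add_lt_of_lt hκ.le (hsmall b) (one_lt_aleph0.trans hκ))
    exact (mk_setOf_finset_subset_le _).trans_lt (max_lt hκ hIic)
  have hE : ∀ b : X, {a | ∀ u ∈ {u : Finset X | ↑u ⊆ Iic b}, a ∈ C u} ∈ U := fun b =>
    (eventually_cardinal_ball (hbounded b)).2 fun u _ => hC u
  filter_upwards [hnormal _ hE, hC ∅] with a ha ha₀ u hu
  rcases u.eq_empty_or_nonempty with rfl | hne
  · exact ha₀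
  · exact ha _ (hu _ (u.max'_mem hne)) u fun x hx => u.le_max' x hx

theorem exists_mem_forall_finset_of_eventually_insert [CardinalInterFilter (U : Filter X) κ]
    (hκ : ℵ₀ < κ) (hsmall : ∀ b : X, #(Iio b) < κ)
    (hnormal : ∀ C : X → Set X, (∀ a, C a ∈ U) → {a | ∀ b < a, a ∈ C b} ∈ U)
    {P : Finset X → Prop} (h₀ : P ∅) (hP : ∀ t, P t → ∀ᶠ α in U, P (insert α t)) :
    ∃ A ∈ U, ∀ w : Finset X, (∀ x ∈ w, x ∈ A) → P w := by
  have hC : ∀ u, {α | P u → P (insert α u)} ∈ U := by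
    intro u
    by_cases hu : P u
    · exact (hP u hu).mono fun α h _ => h
    · exact univ_mem' fun α h => absurd h hu
  refine ⟨_, diagonal_finset_mem hκ hsmall hnormal hC, fun w => ?_⟩
  induction w using Finset.induction_on_max with
  | empty => exact fun _ => h₀
  | insert a u hlt ih =>
    intro hw
    exact hw a (Finset.mem_insert_self a u) u hlt
      (ih fun x hx => hw x (Finset.mem_insert_of_mem hx))

end Ultrafilter

theorem map_symmDiff_nhds_bot {β : Type*} [GeneralizedBooleanAlgebra β] [TopologicalSpace β]
    (hcont : Continuous fun p : β × β => p.1 ∆ p.2) (s : β) :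
    map (s ∆ ·) (𝓝 ⊥) = 𝓝 s := by
  have hcont_s : Continuous (s ∆ ·) := hcont.comp (continuous_const.prodMk continuous_id)
  refine map_eq_of_inverse (s ∆ ·) (funext fun w => symmDiff_symmDiff_cancel_left s w) ?_ ?_
  · simpa using hcont_s.tendsto ⊥
  · simpa using hcont_s.tendsto s

namespace Finset

section DecidableEq

variable {X : Type*} [DecidableEq X]

theorem symmDiff_singleton_of_notMem {s : Finset X} {a : X} (h : a ∉ s) :
    s ∆ {a} = insert a s := by
  rw [symmDiff_eq_union (disjoint_singleton_right.2 h), union_comm, insert_eq]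

theorem symmDiff_insert_of_notMem {s t : Finset X} {a : X} (hs : a ∉ s) (ht : a ∉ t) :
    s ∆ insert a t = insert a (s ∆ t) := by
  have hst : a ∉ s ∆ t := fun h => (mem_union.1 (symmDiff_subset_union h)).elim hs ht
  rw [← symmDiff_singleton_of_notMem ht, ← symmDiff_assoc, symmDiff_singleton_of_notMem hst]

variable [TopologicalSpace (Finset X)] {F : Filter X}

theorem nhds_hasBasis_symmDiff (hcont : Continuous fun p : Finset X × Finset X => p.1 ∆ p.2)
    (hbasis : (𝓝 (∅ : Finset X)).HasBasis (· ∈ F) fun A => {s | ∀ x ∈ s, x ∈ A})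
    (s : Finset X) :
    (𝓝 s).HasBasis (· ∈ F) fun A => (s ∆ ·) '' {w | ∀ x ∈ w, x ∈ A} := by
  rw [← map_symmDiff_nhds_bot hcont s]
  exact hbasis.map _

theorem mem_nhds_iff_symmDiff (hcont : Continuous fun p : Finset X × Finset X => p.1 ∆ p.2)
    (hbasis : (𝓝 (∅ : Finset X)).HasBasis (· ∈ F) fun A => {s | ∀ x ∈ s, x ∈ A})
    {W : Set (Finset X)} {s : Finset X} :
    W ∈ 𝓝 s ↔ ∃ A ∈ F, ∀ w : Finset X, (∀ x ∈ w, x ∈ A) → s ∆ w ∈ W := by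
  simp only [(nhds_hasBasis_symmDiff hcont hbasis s).mem_iff, Set.image_subset_iff]
  rfl

theorem mem_closure_iff_symmDiff (hcont : Continuous fun p : Finset X × Finset X => p.1 ∆ p.2)
    (hbasis : (𝓝 (∅ : Finset X)).HasBasis (· ∈ F) fun A => {s | ∀ x ∈ s, x ∈ A})
    {V : Set (Finset X)} {s : Finset X} :
    s ∈ closure V ↔ ∀ A ∈ F, ∃ w : Finset X, (∀ x ∈ w, x ∈ A) ∧ s ∆ w ∈ V := by
  rw [mem_closure_iff_nhds_basis (nhds_hasBasis_symmDiff hcont hbasis s)]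
  refine forall₂_congr fun A _ => ⟨?_, fun ⟨w, hw, hV⟩ => ⟨_, hV, w, hw, rfl⟩⟩
  rintro ⟨_, hV, w, hw, rfl⟩
  exact ⟨w, hw, hV⟩

theorem eventually_insert_mem_of_isOpen
    (hcont : Continuous fun p : Finset X × Finset X => p.1 ∆ p.2)
    (hbasis : (𝓝 (∅ : Finset X)).HasBasis (· ∈ F) fun A => {s | ∀ x ∈ s, x ∈ A})
    (hF : F ≤ cofinite) {V : Set (Finset X)} (hV : IsOpen V) {t : Finset X} (ht : t ∈ V) :
    ∀ᶠ α in F, insert α t ∈ V := by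
  obtain ⟨A, hA, hAV⟩ := (mem_nhds_iff_symmDiff hcont hbasis).1 (hV.mem_nhds ht)
  filter_upwards [hA, hF t.eventually_cofinite_notMem] with α hαA hαt
  rw [← symmDiff_singleton_of_notMem hαt]
  exact hAV {α} (by simpa using hαA)

end DecidableEq

section LinearOrder

variable {X : Type*} [LinearOrder X] [TopologicalSpace (Finset X)] {U : Ultrafilter X}

theorem eventually_insert_mem_closure
    (hcont : Continuous fun p : Finset X × Finset X => p.1 ∆ p.2)
    (hbasis : (𝓝 (∅ : Finset X)).HasBasis (· ∈ U) fun A => {s | ∀ x ∈ s, x ∈ A})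
    (hU : (U : Filter X) ≤ cofinite)
    (hnormal : ∀ C : X → Set X, (∀ a, C a ∈ U) → {a | ∀ b < a, a ∈ C b} ∈ U)
    {V : Set (Finset X)} (hV : IsOpen V) {t : Finset X} (ht : t ∈ closure V) :
    ∀ᶠ α in U, insert α t ∈ closure V := by
  by_contra hbad
  replace hbad : ∀ᶠ α in U, insert α t ∉ closure V := Ultrafilter.eventually_not.2 hbad
  have hB : ∀ α, ∃ B ∈ U, insert α t ∉ closure V →
      ∀ w : Finset X, (∀ x ∈ w, x ∈ B) → insert α t ∆ w ∉ V := by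
    intro α
    by_cases hα : insert α t ∈ closure V
    · exact ⟨Set.univ, univ_mem, fun h => absurd hα h⟩
    · rw [mem_closure_iff_symmDiff hcont hbasis] at hα
      push Not at hα
      obtain ⟨B, hB, hBV⟩ := hα
      exact ⟨B, hB, fun _ => hBV⟩
  choose B hBU hBV using hB
  obtain ⟨w, hw, htw⟩ := (mem_closure_iff_symmDiff hcont hbasis).1 ht _
    ((hbad.and (hnormal B hBU)).and (hU t.eventually_cofinite_notMem))
  rcases w.eq_empty_or_nonempty with rfl | hne
  · rw [← bot_eq_empty, symmDiff_bot] at htw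
    obtain ⟨α, hα, hαV⟩ :=
      (hbad.and (eventually_insert_mem_of_isOpen hcont hbasis hU hV htw)).exists
    exact hα (subset_closure hαV)
  · set α := w.min' hne
    obtain ⟨⟨hαbad, -⟩, hαt⟩ := hw α (w.min'_mem hne)
    refine hBV α hαbad (w.erase α)
      (fun x hx => (hw x (mem_of_mem_erase hx)).1.2 α (w.min'_lt_of_mem_erase_min' hne hx)) ?_
    rwa [← symmDiff_singleton_of_notMem hαt, symmDiff_assoc, symmDiff_comm ({α} : Finset X),
      symmDiff_singleton_of_notMem (notMem_erase α w),
      insert_erase (w.min'_mem hne)]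

end LinearOrder

end Finset

/-- For a normal κ-complete nonprincipal ultrafilter U on a measurable
cardinal κ, the topological group B(κ_U) is extremally disconnected: the closure of every
open set is open. -/
theorem stmt_14 (κ : Cardinal.{0}) (hκ : Cardinal.aleph0 < κ)
    (U : Ultrafilter κ.ord.ToType)
    (hnonprincipal : ∀ x, U ≠ pure x)
    (hcomplete : ∀ S : Set (Set κ.ord.ToType), #S < κ → (∀ s ∈ S, s ∈ U) → ⋂₀ S ∈ U)
    (hnormal : ∀ X : κ.ord.ToType → Set κ.ord.ToType,
      (∀ a, X a ∈ U) → {a | ∀ b < a, a ∈ X b} ∈ U)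
    (τ : TopologicalSpace (Finset κ.ord.ToType))
    (hcont : @Continuous (Finset κ.ord.ToType × Finset κ.ord.ToType) (Finset κ.ord.ToType)
      (@instTopologicalSpaceProd _ _ τ τ) τ (fun p => p.1 ∆ p.2))
    (hbasis : (@nhds _ τ ∅).HasBasis (· ∈ U)
      (fun A => {s : Finset κ.ord.ToType | ∀ x ∈ s, x ∈ A})) :
    ∀ V : Set (Finset κ.ord.ToType), @IsOpen _ τ V → @IsOpen _ τ (@closure _ τ V) := by
  let _ := τ
  have : CardinalInterFilter (U : Filter κ.ord.ToType) κ := ⟨hcomplete⟩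
  have hU : (U : Filter κ.ord.ToType) ≤ cofinite :=
    U.le_cofinite_or_eq_pure.resolve_right fun ⟨x, hx⟩ => hnonprincipal x hx
  have hsmall : ∀ b : κ.ord.ToType, #(Iio b) < κ := fun b => by simpa using mk_Iio_lt b
  intro V hV
  refine isOpen_iff_mem_nhds.2 fun s hs => (Finset.mem_nhds_iff_symmDiff hcont hbasis).2 ?_
  have hs₀ : s ∆ ∅ ∈ closure V := by rwa [← Finset.bot_eq_empty, symmDiff_bot]
  refine U.exists_mem_forall_finset_of_eventually_insert (P := fun t => s ∆ t ∈ closure V)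
    hκ hsmall hnormal hs₀ fun t ht => ?_
  filter_upwards [Finset.eventually_insert_mem_closure hcont hbasis hU hnormal hV ht,
    hU s.eventually_cofinite_notMem, hU t.eventually_cofinite_notMem] with α hα hαs hαt
  rwa [Finset.symmDiff_insert_of_notMem hαs hαt]
end

section
/- Let κ be a measurable cardinal and U a κ-complete nonprincipal ultrafilter on κ. Then every subset of B(κ_U) of cardinality less than κ is closed and discrete. -/
open Cardinal Filter Set Topology
open scoped symmDiff

/-!
Nonprincipality together with κ-completeness puts the complement of every set of size `< κ`
into `U`. Given `D` with `|D| < κ` and any point `t`, the union `S` of the supports of `t` and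
of the members of `D` has size `< κ`, so `t + [κ \ S]^{<ω}` is a neighbourhood of `t`; it meets
`D` at most in `t`, because `t ∆ u ⊆ t ∪ u ⊆ S`. So `D` has no accumulation point at all.
-/

universe u

theorem Ultrafilter.compl_singleton_mem {α : Type*} {U : Ultrafilter α} (hU : ∀ x, U ≠ pure x)
    (x : α) : ({x}ᶜ : Set α) ∈ U := by
  rcases U.le_cofinite_or_eq_pure with h | ⟨a, rfl⟩
  · exact h (finite_singleton x).compl_mem_cofinite
  · exact absurd rfl (hU a)

theorem Ultrafilter.compl_mem_of_mk_lt {α : Type u} {U : Ultrafilter α} {κ : Cardinal.{u}}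
    (hU : ∀ x, U ≠ pure x)
    (hcomplete : ∀ S : Set (Set α), #S < κ → (∀ s ∈ S, s ∈ U) → ⋂₀ S ∈ U)
    {B : Set α} (hB : #B < κ) : Bᶜ ∈ U := by
  have hB' : Bᶜ = ⋂₀ ((fun x => ({x}ᶜ : Set α)) '' B) := by
    rw [sInter_image, ← compl_iUnion₂, biUnion_of_singleton]
  rw [hB']
  refine hcomplete _ (mk_image_le.trans_lt hB) ?_
  rintro _ ⟨x, -, rfl⟩
  exact compl_singleton_mem hU x

theorem Cardinal.mk_biUnion_finset_lt {α : Type u} {κ : Cardinal.{u}} (hκ : ℵ₀ < κ)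
    {D : Set (Finset α)} (hD : #D < κ) : #(⋃ s ∈ D, (s : Set α)) < κ :=
  calc #(⋃ s ∈ D, (s : Set α))
      ≤ #D * ℵ₀ := (mk_biUnion_le _ D).trans <| by
        gcongr
        exact ciSup_le' fun s => (finset_card_lt_aleph0 _).le
    _ < κ := mul_lt_of_lt hκ.le hD hκ

theorem Finset.eq_of_coe_symmDiff_subset {α : Type*} [DecidableEq α] {s t : Finset α} {A : Set α}
    (h : (↑(s ∆ t) : Set α) ⊆ A) (hs : Disjoint (s : Set α) A) (ht : Disjoint (t : Set α) A) :
    s = t := by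
  have hdisj : Disjoint (↑(s ∆ t) : Set α) A := by
    rw [coe_symmDiff]
    exact (hs.sup_left ht).mono_left symmDiff_le_sup
  rw [← symmDiff_eq_bot, bot_eq_empty, ← coe_eq_empty]
  exact hdisj.eq_bot_of_le h

theorem symmDiff_preimage_mem_nhds {X : Type*} [GeneralizedBooleanAlgebra X] [TopologicalSpace X]
    (hcont : Continuous fun p : X × X => p.1 ∆ p.2) (t : X) {N : Set X} (hN : N ∈ 𝓝 ⊥) :
    (t ∆ ·) ⁻¹' N ∈ 𝓝 t := by
  have htrans : Continuous (t ∆ ·) := hcont.comp (continuous_const.prodMk continuous_id)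
  refine htrans.continuousAt.preimage_mem_nhds ?_
  rwa [symmDiff_self]

theorem Finset.exists_mem_nhds_inter_subset_singleton {α : Type*} [DecidableEq α]
    [TopologicalSpace (Finset α)] (hcont : Continuous fun p : Finset α × Finset α => p.1 ∆ p.2)
    {A : Set α} (hA : {s : Finset α | ∀ x ∈ s, x ∈ A} ∈ 𝓝 ∅) {t : Finset α}
    (ht : Disjoint (t : Set α) A) {D : Set (Finset α)} (hD : ∀ s ∈ D, Disjoint (s : Set α) A) :
    ∃ W ∈ 𝓝 t, W ∩ D ⊆ {t} :=
  ⟨_, symmDiff_preimage_mem_nhds hcont t hA, fun u ⟨hu, huD⟩ =>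
    (eq_of_coe_symmDiff_subset hu ht (hD u huD)).symm⟩

theorem isClosed_and_exists_isOpen_inter_eq_singleton {X : Type*} [TopologicalSpace X]
    {D : Set X} (h : ∀ t, ∃ W ∈ 𝓝 t, W ∩ D ⊆ {t}) :
    IsClosed D ∧ ∀ s ∈ D, ∃ V, IsOpen V ∧ V ∩ D = {s} := by
  refine ⟨isOpen_compl_iff.1 <| isOpen_iff_mem_nhds.2 fun t ht => ?_, fun s hs => ?_⟩
  · obtain ⟨W, hW, hWD⟩ := h t
    exact mem_of_superset hW fun u hu huD => ht (hWD ⟨hu, huD⟩ ▸ huD)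
  · obtain ⟨W, hW, hWD⟩ := h s
    exact ⟨interior W, isOpen_interior, Subset.antisymm
      (fun u hu => hWD ⟨interior_subset hu.1, hu.2⟩)
      (singleton_subset_iff.2 ⟨mem_interior_iff_mem_nhds.2 hW, hs⟩)⟩

/-- For a κ-complete nonprincipal ultrafilter U on a measurable cardinal κ,
every subset of B(κ_U) of cardinality less than κ is closed and discrete. -/
theorem stmt_16 (κ : Cardinal.{0}) (hκ : Cardinal.aleph0 < κ)
    (U : Ultrafilter κ.ord.ToType)
    (hnonprincipal : ∀ x, U ≠ pure x)
    (hcomplete : ∀ S : Set (Set κ.ord.ToType), #S < κ → (∀ s ∈ S, s ∈ U) → ⋂₀ S ∈ U)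
    (τ : TopologicalSpace (Finset κ.ord.ToType))
    (hcont : @Continuous (Finset κ.ord.ToType × Finset κ.ord.ToType) (Finset κ.ord.ToType)
      (@instTopologicalSpaceProd _ _ τ τ) τ (fun p => p.1 ∆ p.2))
    (hbasis : (@nhds _ τ ∅).HasBasis (· ∈ U)
      (fun A => {s : Finset κ.ord.ToType | ∀ x ∈ s, x ∈ A})) :
    ∀ D : Set (Finset κ.ord.ToType), #D < κ →
      @IsClosed _ τ D ∧ ∀ s ∈ D, ∃ V : Set (Finset κ.ord.ToType),
        @IsOpen _ τ V ∧ V ∩ D = {s} := by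
  let _ := τ
  intro D hD
  refine isClosed_and_exists_isOpen_inter_eq_singleton fun t => ?_
  set S := (⋃ s ∈ D, (s : Set κ.ord.ToType)) ∪ t
  have hS : #S < κ :=
    (mk_union_le _ _).trans_lt (add_lt_of_lt hκ.le (mk_biUnion_finset_lt hκ hD)
      ((finset_card_lt_aleph0 t).trans hκ))
  refine Finset.exists_mem_nhds_inter_subset_singleton hcont
    (hbasis.mem_of_mem (U.compl_mem_of_mk_lt hnonprincipal hcomplete hS))
    (disjoint_compl_right.mono_left subset_union_right) fun s hs => ?_
  exact disjoint_compl_right.mono_left ((subset_biUnion_of_mem hs).trans subset_union_left)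
end

section
/- Let U be a σ-complete (countably complete) ultrafilter on κ, and let B(κ_U) be the Boolean group of finite subsets of κ with neighborhood base at zero {[A]^{<ω} : A ∈ U}. If ∅ is in the closure of an open set V ⊆ B(κ_U) with ∅ ∉ V, then there exists a positive integer k such that ∅ is in the closure of V ∩ [κ]^k. -/
open Cardinal Ordinal Filter Set
open scoped symmDiff Topology

/-! The neighbourhoods `[A]^{<ω}`, `A ∈ U`, of `∅` are closed under countable intersections
because `U` is. So if `∅` were outside the closure of each layer `V ∩ [κ]^k`, witnessed by
`A_k ∈ U`, then `[⋂ A_k]^{<ω}` would miss all of `V ∖ {∅} = V`. -/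

theorem Filter.countableInterFilter_of_iInter_nat_mem {α : Type*} {l : Filter α}
    (h : ∀ f : ℕ → Set α, (∀ n, f n ∈ l) → (⋂ n, f n) ∈ l) : CountableInterFilter l where
  countable_sInter_mem S hS hSl := by
    rcases S.eq_empty_or_nonempty with rfl | hne
    · simp
    obtain ⟨f, rfl⟩ := hS.exists_eq_range hne
    rw [sInter_range]
    exact h f fun n => hSl _ (mem_range_self n)

theorem exists_mem_closure_of_mem_closure_iUnion {X α ι : Type*} [TopologicalSpace X]
    [Countable ι] {l : Filter α} [CountableInterFilter l] {S : Set α → Set X} {x : X}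
    (hS : Monotone S) (hbasis : (𝓝 x).HasBasis (· ∈ l) S) {V : ι → Set X}
    (hx : x ∈ closure (⋃ i, V i)) : ∃ i, x ∈ closure (V i) := by
  by_contra! hV
  simp only [mem_closure_iff_nhds_basis hbasis, not_forall, not_exists, not_and] at hV
  choose A hAl hAV using hV
  obtain ⟨y, hyV, hyS⟩ :=
    (mem_closure_iff_nhds_basis hbasis).1 hx (⋂ i, A i) (countable_iInter_mem.2 hAl)
  obtain ⟨i, hyi⟩ := mem_iUnion.1 hyV
  exact hAV i y hyi (hS (iInter_subset A i) hyS)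

theorem stmt_17_general (κ : Cardinal.{0})
    (U : Ultrafilter κ.ord.ToType)
    (hsigma : ∀ f : ℕ → Set κ.ord.ToType, (∀ n, f n ∈ U) → (⋂ n, f n) ∈ U)
    (τ : TopologicalSpace (Finset κ.ord.ToType))
    (hbasis : (@nhds _ τ ∅).HasBasis (· ∈ U)
      (fun A => {s : Finset κ.ord.ToType | ∀ x ∈ s, x ∈ A}))
    (V : Set (Finset κ.ord.ToType))
    (hcl : (∅ : Finset κ.ord.ToType) ∈ @closure _ τ V)
    (hnot : (∅ : Finset κ.ord.ToType) ∉ V) :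
    ∃ k : ℕ, 0 < k ∧
      (∅ : Finset κ.ord.ToType) ∈ @closure _ τ (V ∩ {s : Finset κ.ord.ToType | s.card = k}) := by
  let _ := τ
  have : CountableInterFilter (U : Filter κ.ord.ToType) :=
    Filter.countableInterFilter_of_iInter_nat_mem fun f hf => hsigma f hf
  have hlayers : V = ⋃ k : ℕ, V ∩ {s | s.card = k + 1} := by
    ext s
    simp only [mem_iUnion, mem_inter_iff, mem_ofPred_eq, exists_and_left]
    refine ⟨fun hs => ⟨hs, s.card - 1, ?_⟩, fun h => h.1⟩
    have hne : s ≠ ∅ := by rintro rfl; exact hnot hs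
    have hpos := Finset.card_pos.2 (Finset.nonempty_iff_ne_empty.2 hne)
    omega
  have hmono : Monotone fun (A : Set κ.ord.ToType) => {s : Finset κ.ord.ToType | ∀ x ∈ s, x ∈ A} :=
    fun A B hAB s hs x hx => hAB (hs x hx)
  rw [hlayers] at hcl
  obtain ⟨k, hk⟩ := exists_mem_closure_of_mem_closure_iUnion (l := (U : Filter _)) hmono hbasis hcl
  exact ⟨k + 1, k.succ_pos, hk⟩

/-- For a σ-complete ultrafilter U on κ, if ∅ lies in the closure of an open
set V of B(κ_U) with ∅ ∉ V, then ∅ lies in the closure of V ∩ [κ]^k for some k ≥ 1. -/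
theorem stmt_17 (κ : Cardinal.{0}) (hκ : Cardinal.aleph0 ≤ κ)
    (U : Ultrafilter κ.ord.ToType)
    (hsigma : ∀ f : ℕ → Set κ.ord.ToType, (∀ n, f n ∈ U) → (⋂ n, f n) ∈ U)
    (τ : TopologicalSpace (Finset κ.ord.ToType))
    (hcont : @Continuous (Finset κ.ord.ToType × Finset κ.ord.ToType) (Finset κ.ord.ToType)
      (@instTopologicalSpaceProd _ _ τ τ) τ (fun p => p.1 ∆ p.2))
    (hbasis : (@nhds _ τ ∅).HasBasis (· ∈ U)
      (fun A => {s : Finset κ.ord.ToType | ∀ x ∈ s, x ∈ A}))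
    (V : Set (Finset κ.ord.ToType)) (hV : @IsOpen _ τ V)
    (hcl : (∅ : Finset κ.ord.ToType) ∈ @closure _ τ V)
    (hnot : (∅ : Finset κ.ord.ToType) ∉ V) :
    ∃ k : ℕ, 0 < k ∧
      (∅ : Finset κ.ord.ToType) ∈ @closure _ τ (V ∩ {s : Finset κ.ord.ToType | s.card = k}) :=
  stmt_17_general κ U hsigma τ hbasis V hcl hnot
end

section
/- For every measurable cardinal κ there exists a nondiscrete Hausdorff extremally disconnected topological group of cardinality κ. -/
/-!
Finite subsets of `κ` are encoded as `κ →₀ ZMod 2`, symmetric difference being addition.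

Every countably complete nonprincipal ultrafilter on a well-order has a normal projection:
project along a function that is minimal in the (well-founded) ultrapower. So let `D` be a
normal, `κ`-complete, nonprincipal ultrafilter on `κ`, and declare the subgroups of finite subsets
of `A`, for `A ∈ D`, to be a basis of neighbourhoods of `0`. Nonprincipality makes this group
topology Hausdorff and nondiscrete.

Let `W` be the closure of an open set `V` and `f ∈ W`. Normality shows that `f + {α} ∈ W` for
`D`-almost all `α`: otherwise a point of `V` close to `f` along a diagonal intersection would,
at the least element of its difference with `f`, contradict the choice of the neighbourhoods.
Applying this to the fewer than `κ` finite sets `p ⊆ [0, γ]` (`κ`-completeness) and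
intersecting diagonally gives `A ∈ D` such that whenever `f + p ∈ W` and `p < β ∈ A`, also
`f + p + {β} ∈ W`. Building a finite subset `p` of `A` in increasing order shows `f + p ∈ W`,
so `W` is open.
-/

open Cardinal Filter Set Topology Finsupp

universe u

namespace Ultrafilter

variable {X : Type*} [LinearOrder X]

/-- Normality of an ultrafilter, in the form of Fodor's pressing-down property. -/
def IsNormal (D : Ultrafilter X) : Prop :=
  ∀ g : X → X, (∀ᶠ α in D, g α < α) → ∃ γ, ∀ᶠ α in D, g α = γ

theorem IsNormal.eventually_forall_lt {D : Ultrafilter X} (hD : D.IsNormal)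
    {p : X → X → Prop} (hp : ∀ γ, ∀ᶠ β in D, p γ β) : ∀ᶠ β in D, ∀ γ < β, p γ β := by
  by_contra hcon
  rw [← Ultrafilter.eventually_not] at hcon
  have hg : ∀ β, ∃ γ, (¬∀ γ < β, p γ β) → γ < β ∧ ¬p γ β := fun β => by
    by_cases h : ∀ γ < β, p γ β
    · exact ⟨β, fun h' => (h' h).elim⟩
    · push Not at h
      obtain ⟨γ, hγ⟩ := h
      exact ⟨γ, fun _ => hγ⟩
  choose g hg using hg
  obtain ⟨γ, hγ⟩ := hD g (hcon.mono fun β hβ => (hg β hβ).1)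
  obtain ⟨β, hβ, hgβ, hpβ⟩ := (hcon.and (hγ.and (hp γ))).exists
  exact (hg β hβ).2 (hgβ ▸ hpβ)

end Ultrafilter

theorem Filter.wellFounded_eventually_lt {ι X : Type*} [LT X] [WellFoundedLT X] (l : Filter ι)
    [CountableInterFilter l] [l.NeBot] :
    WellFounded fun f g : ι → X => ∀ᶠ i in l, f i < g i := by
  rw [wellFounded_iff_isEmpty_descending_chain]
  refine ⟨fun ⟨f, hf⟩ => ?_⟩
  obtain ⟨i, hi⟩ := (eventually_countable_forall.2 hf).exists
  exact (wellFounded_iff_isEmpty_descending_chain.1 wellFounded_lt).false ⟨fun n => f n i, hi⟩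

theorem Ultrafilter.exists_isNormal_map {X : Type*} [LinearOrder X] [WellFoundedLT X]
    (U : Ultrafilter X) [CountableInterFilter (U : Filter X)] (hU : ∀ x, U ≠ pure x) :
    ∃ f : X → X, (∀ x, U.map f ≠ pure x) ∧ (U.map f).IsNormal := by
  obtain ⟨f, hf, hmin⟩ := (wellFounded_eventually_lt (X := X) (U : Filter X)).has_min
    {f | ∀ x, U.map f ≠ pure x} ⟨id, by simpa using hU⟩
  refine ⟨f, hf, fun g hg => ?_⟩
  obtain ⟨γ, hγ⟩ : ∃ γ, U.map (g ∘ f) = pure γ := by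
    by_contra! h
    exact hmin (g ∘ f) h hg
  refine ⟨γ, (Ultrafilter.mem_map (m := g) (s := {γ})).1 ?_⟩
  rw [Ultrafilter.map_map, hγ]
  exact Ultrafilter.mem_pure.2 rfl

theorem Finsupp.single_add_mem_supported_iff {X M R : Type*} [Semiring R] [AddCommMonoid M]
    [Module R M] {s : Set X} {a : X} {b : M} {p : X →₀ M} (ha : a ∉ p.support) (hb : b ≠ 0) :
    single a b + p ∈ supported M R s ↔ a ∈ s ∧ p ∈ supported M R s := by
  classical
  simp only [mem_supported, support_single_add ha hb, Finset.coe_cons, insert_subset_iff]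

theorem Finsupp.exists_eq_single_one_add {X : Type*} [LinearOrder X] {p : X →₀ ZMod 2}
    (hp : p ≠ 0) : ∃ a q, (∀ c ∈ q.support, a < c) ∧ p = single a 1 + q := by
  induction p using Finsupp.induction_on_min with
  | zero => exact (hp rfl).elim
  | single_add a b q hlt hb _ =>
    obtain rfl : b = 1 := Fin.eq_one_of_ne_zero b hb
    exact ⟨a, q, hlt, rfl⟩

theorem Cardinal.mk_supported_lt {X M : Type u} [AddCommGroup M] [Finite M] {κ : Cardinal.{u}}
    (hκ : ℵ₀ < κ) {s : Set X} (hs : #s < κ) : #(supported M ℤ s) < κ := by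
  rw [(supportedEquivFinsupp (M := M) (R := ℤ) s).toEquiv.cardinal_eq]
  rcases finite_or_infinite s with hfin | hinf
  · have : Finite (s →₀ M) := Finite.of_injective _ DFunLike.coe_injective
    exact (lt_aleph0_of_finite _).trans hκ
  rcases subsingleton_or_nontrivial M with hM | hM
  · have : Finite (s →₀ M) := Finite.of_injective _ DFunLike.coe_injective
    exact (lt_aleph0_of_finite _).trans hκ
  rw [mk_finsupp_of_infinite]
  exact max_lt hs ((lt_aleph0_of_finite M).trans hκ)

theorem Ultrafilter.IsNormal.eventually_forall_supported_Iio {X M : Type u} [LinearOrder X]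
    [AddCommGroup M] [Finite M] {D : Ultrafilter X} (hD : D.IsNormal) {κ : Cardinal.{u}}
    [CardinalInterFilter (D : Filter X) κ] (hκ : ℵ₀ < κ) (hX : ∀ α : X, #(Iic α) < κ)
    {P : (X →₀ M) → X → Prop} (hP : ∀ p, ∀ᶠ β in D, P p β) :
    ∀ᶠ β in D, ∀ p ∈ supported M ℤ (Iio β), P p β := by
  have hIic : ∀ γ, ∀ᶠ β in D, ∀ p ∈ supported M ℤ (Iic γ), P p β := fun γ =>
    (eventually_cardinal_ball (mk_supported_lt hκ (hX γ))).2 fun p _ => hP p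
  filter_upwards [hD.eventually_forall_lt hIic, hP 0] with β hβ hβ0 p hp
  rcases eq_or_ne p 0 with rfl | hp0
  · exact hβ0
  · have hne := support_nonempty_iff.2 hp0
    exact hβ _ (hp (p.support.max'_mem hne)) p fun x hx => p.support.le_max' x hx

section SupportedNhds

variable {X M : Type*} [AddCommGroup M]

noncomputable abbrev Finsupp.supportedAddGroupFilterBasis (F : Filter X) :
    AddGroupFilterBasis (X →₀ M) :=
  addGroupFilterBasisOfComm ((fun A => (supported M ℤ A : Set (X →₀ M))) '' F.sets)
    ⟨_, univ, univ_mem, rfl⟩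
    (by
      rintro _ _ ⟨A, hA, rfl⟩ ⟨B, hB, rfl⟩
      exact ⟨_, ⟨A ∩ B, inter_mem hA hB, rfl⟩, by simp [supported_inter]⟩)
    (by rintro _ ⟨A, -, rfl⟩; exact zero_mem _)
    (by
      rintro _ ⟨A, hA, rfl⟩
      exact ⟨_, ⟨A, hA, rfl⟩, by rintro _ ⟨p, hp, q, hq, rfl⟩; exact add_mem hp hq⟩)
    (by
      rintro _ ⟨A, hA, rfl⟩
      exact ⟨_, ⟨A, hA, rfl⟩, fun p hp => neg_mem hp⟩)

theorem Finsupp.hasBasis_nhds_zero_supportedAddGroupFilterBasis (F : Filter X) :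
    (@nhds (X →₀ M) (supportedAddGroupFilterBasis F).topology 0).HasBasis (· ∈ F)
      (fun A => supported M ℤ A) :=
  (supportedAddGroupFilterBasis F).nhds_zero_hasBasis.to_hasBasis
    (by rintro _ ⟨A, hA, rfl⟩; exact ⟨A, hA, subset_rfl⟩)
    (fun A hA => ⟨_, ⟨A, hA, rfl⟩, subset_rfl⟩)

variable [TopologicalSpace (X →₀ M)] {F : Filter X}
  (hF : (𝓝 (0 : X →₀ M)).HasBasis (· ∈ F) (fun A => supported M ℤ A))
include hF

theorem not_discreteTopology_of_hasBasis_supported [F.NeBot] [Nontrivial M] :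
    ¬DiscreteTopology (X →₀ M) := by
  intro _
  obtain ⟨A, hA, hA0⟩ := hF.mem_iff.1 (isOpen_discrete {(0 : X →₀ M)} |>.mem_nhds rfl)
  obtain ⟨a, ha⟩ := F.nonempty_of_mem hA
  obtain ⟨b, hb⟩ := exists_ne (0 : M)
  exact hb (single_eq_zero.1 (hA0 (single_mem_supported ℤ b ha)))

variable [IsTopologicalAddGroup (X →₀ M)]

theorem hasBasis_nhds_of_hasBasis_supported (x : X →₀ M) :
    (𝓝 x).HasBasis (· ∈ F) (fun A => (x + ·) '' supported M ℤ A) :=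
  map_add_left_nhds_zero x ▸ hF.map _

theorem mem_nhds_iff_of_hasBasis_supported {x : X →₀ M} {s : Set (X →₀ M)} :
    s ∈ 𝓝 x ↔ ∃ A ∈ F, ∀ p ∈ supported M ℤ A, x + p ∈ s := by
  simp only [(hasBasis_nhds_of_hasBasis_supported hF x).mem_iff, image_subset_iff]
  rfl

theorem mem_closure_iff_of_hasBasis_supported {x : X →₀ M} {V : Set (X →₀ M)} :
    x ∈ closure V ↔ ∀ A ∈ F, ∃ p ∈ supported M ℤ A, x + p ∈ V := by
  simp only [mem_closure_iff_nhds_basis' (hasBasis_nhds_of_hasBasis_supported hF x),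
    image_inter_nonempty_iff]
  rfl

theorem t2Space_of_hasBasis_supported (hcof : F ≤ cofinite) : T2Space (X →₀ M) := by
  refine IsTopologicalAddGroup.t2Space_of_zero_sep fun p hp => ?_
  obtain ⟨a, ha⟩ := support_nonempty_iff.2 hp
  refine ⟨_, hF.mem_of_mem (hcof (finite_singleton a).compl_mem_cofinite), fun hmem => ?_⟩
  exact (mem_supported ℤ p).1 hmem ha rfl

end SupportedNhds

section ExtremallyDisconnected

variable {X : Type} [LinearOrder X] [TopologicalSpace (X →₀ ZMod 2)]
  [IsTopologicalAddGroup (X →₀ ZMod 2)] {D : Ultrafilter X}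
  (hB : (𝓝 (0 : X →₀ ZMod 2)).HasBasis (· ∈ (D : Filter X)) (fun A => supported (ZMod 2) ℤ A))
  (hD : D.IsNormal)
include hB hD

theorem eventually_add_single_mem_closure {V : Set (X →₀ ZMod 2)} (hV : IsOpen V)
    {f : X →₀ ZMod 2} (hf : f ∈ closure V) : ∀ᶠ α in D, f + single α 1 ∈ closure V := by
  by_cases hfV : f ∈ V
  · obtain ⟨A, hA, hAV⟩ := (mem_nhds_iff_of_hasBasis_supported hB).1 (hV.mem_nhds hfV)
    filter_upwards [hA] with α hα using subset_closure (hAV _ (single_mem_supported ℤ 1 hα))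
  by_contra hT
  rw [← Ultrafilter.eventually_not] at hT
  have hC : ∀ α, ∃ C ∈ D, f + single α 1 ∉ closure V →
      ∀ p ∈ supported (ZMod 2) ℤ C, f + single α 1 + p ∉ V := by
    intro α
    by_cases h : f + single α 1 ∈ closure V
    · exact ⟨univ, univ_mem, fun h' => (h' h).elim⟩
    · rw [mem_closure_iff_of_hasBasis_supported hB] at h
      push Not at h
      obtain ⟨C, hC, hCV⟩ := h
      exact ⟨C, hC, fun _ => hCV⟩
  choose C hCD hC using hC
  obtain ⟨p, hp, hpV⟩ := (mem_closure_iff_of_hasBasis_supported hB).1 hf _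
    (hT.and (hD.eventually_forall_lt hCD))
  -- `α` is the least point where `f + p ∈ V` differs from `f`; the rest of `p` lies in `C α`.
  have hp0 : p ≠ 0 := by rintro rfl; exact hfV (by simpa using hpV)
  obtain ⟨α, q, hlt, rfl⟩ := exists_eq_single_one_add hp0
  obtain ⟨⟨hαT, -⟩, hq⟩ :=
    (single_add_mem_supported_iff (fun h => (hlt α h).false) one_ne_zero).1 hp
  refine hC α hαT q (fun c hc => (hq hc).2 α (hlt c hc)) ?_
  rwa [add_assoc]

theorem extremallyDisconnected_of_hasBasis_supported {κ : Cardinal}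
    [CardinalInterFilter (D : Filter X) κ] (hκ : ℵ₀ < κ) (hX : ∀ α : X, #(Iic α) < κ) :
    ExtremallyDisconnected (X →₀ ZMod 2) := by
  refine ⟨fun V hV => isOpen_iff_mem_nhds.2 fun f hf => ?_⟩
  have hstep : ∀ p, ∀ᶠ β in D, f + p ∈ closure V → f + p + single β 1 ∈ closure V := fun p => by
    by_cases h : f + p ∈ closure V
    · exact (eventually_add_single_mem_closure hB hD hV h).mono fun _ h' _ => h'
    · exact Eventually.of_forall fun _ h' => (h h').elim
  have hA := hD.eventually_forall_supported_Iio hκ hX hstep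
  refine (mem_nhds_iff_of_hasBasis_supported hB).2 ⟨_, hA, fun p hp => ?_⟩
  induction p using Finsupp.induction_on_max with
  | zero => simpa using hf
  | single_add a b p hlt hb ih =>
    obtain rfl : b = 1 := Fin.eq_one_of_ne_zero b hb
    obtain ⟨ha, hp⟩ := (single_add_mem_supported_iff (fun h => (hlt a h).false) hb).1 hp
    rw [add_comm (single a 1), ← add_assoc]
    exact ha p hlt (ih hp)

end ExtremallyDisconnected

/-- For every measurable cardinal κ there exists a nondiscrete Hausdorff
extremally disconnected topological group of cardinality κ. -/
theorem stmt_18 (κ : Cardinal.{0}) (hκ : Cardinal.aleph0 < κ)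
    (hmeasurable : ∃ U : Ultrafilter κ.ord.ToType, (∀ x, U ≠ pure x) ∧
      ∀ S : Set (Set κ.ord.ToType), #S < κ → (∀ s ∈ S, s ∈ U) → ⋂₀ S ∈ U) :
    ∃ (G : Type) (g : AddCommGroup G) (τ : TopologicalSpace G),
      @IsTopologicalAddGroup G τ g.toAddGroup ∧
      @T2Space G τ ∧
      τ ≠ ⊥ ∧
      (∀ V : Set G, @IsOpen G τ V → @IsOpen G τ (@closure G τ V)) ∧
      #G = κ := by
  obtain ⟨U, hU, hUκ⟩ := hmeasurable
  have : CardinalInterFilter (U : Filter κ.ord.ToType) κ := ⟨hUκ⟩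
  have := CardinalInterFilter.toCountableInterFilter (U : Filter κ.ord.ToType) hκ
  obtain ⟨f, hf, hD⟩ := U.exists_isNormal_map hU
  have : CardinalInterFilter (U.map f : Filter κ.ord.ToType) κ := by
    rw [Ultrafilter.coe_map]; infer_instance
  set D := U.map f
  have : Infinite κ.ord.ToType := infinite_iff.2 (by simpa using hκ.le)
  let B := supportedAddGroupFilterBasis (M := ZMod 2) (D : Filter κ.ord.ToType)
  let := B.topology
  have hB :=
    hasBasis_nhds_zero_supportedAddGroupFilterBasis (M := ZMod 2) (D : Filter κ.ord.ToType)
  refine ⟨_, inferInstance, B.topology, B.isTopologicalAddGroup,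
    t2Space_of_hasBasis_supported hB
      (D.le_cofinite_or_eq_pure.resolve_right fun ⟨x, hx⟩ => hf x hx),
    fun h => not_discreteTopology_of_hasBasis_supported hB ⟨h⟩,
    (extremallyDisconnected_of_hasBasis_supported hB hD hκ fun α => ?_).open_closure, ?_⟩
  · simpa using mk_Iic_lt α (by simp) (by simpa using hκ.le)
  · rw [mk_finsupp_of_infinite, mk_ord_toType]
    exact max_eq_left ((lt_aleph0_of_finite _).trans hκ).le
end
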